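/- arXiv:2009.00598 — 4 statements merged into one kernel-verified Lean document; each statement's English description precedes it below -/
import Mathlib

section
/- There exists N such that for every even n ≥ N the following holds: if G is a typical simple 3-regular graph on n vertices and (V1, V2) is a minimal bisection of G, then for each i ∈ {1, 2} there exist two distinct vertices u, w ∈ V_i, each of degree at most two in G[V_i], whose distance in G[V_i] is at most eight. -/
open SimpleGraph

/-- The number of edges of `G` with one endpoint in `V1` and the other in `V2`. -/
noncomputable def cutSize {V : Type*} (G : SimpleGraph V) (V1 V2 : Set V) : ℕ :=
  {p : V × V | p.1 ∈ V1 ∧ p.2 ∈ V2 ∧ G.Adj p.1 p.2}.ncard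

/-- `(V1, V2)` is a bisection: a partition of the vertex set into two parts of equal size. -/
def IsBisection {V : Type*} (V1 V2 : Set V) : Prop :=
  V1 ∪ V2 = Set.univ ∧ Disjoint V1 V2 ∧ V1.ncard = V2.ncard

/-- The bisection width of `G`: the minimum size of a bisection. -/
noncomputable def bisectionWidth {V : Type*} (G : SimpleGraph V) : ℕ :=
  sInf {m : ℕ | ∃ V1 V2 : Set V, IsBisection V1 V2 ∧ cutSize G V1 V2 = m}

/-- A minimal bisection: a bisection whose size equals the bisection width. -/
def IsMinimalBisection {V : Type*} (G : SimpleGraph V) (V1 V2 : Set V) : Prop :=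
  IsBisection V1 V2 ∧ cutSize G V1 V2 = bisectionWidth G

/-- `G` is (simple) 3-regular: every vertex has exactly 3 neighbours. -/
def IsCubic {V : Type*} (G : SimpleGraph V) : Prop :=
  ∀ v : V, (G.neighborSet v).ncard = 3

/-- `v` lies on a cycle of length `ℓ` in `G`. -/
def OnCycleOfLength {V : Type*} (G : SimpleGraph V) (ℓ : ℕ) (v : V) : Prop :=
  ∃ (u : V) (w : G.Walk u u), w.IsCycle ∧ w.length = ℓ ∧ v ∈ w.support

/-- A 3-regular graph on `n` vertices is typical if its bisection width is at least `0.10·n`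
and, for every `ℓ ≤ 20`, at most `log n` vertices lie on a cycle of length `ℓ`. -/
def Typical {n : ℕ} (G : SimpleGraph (Fin n)) : Prop :=
  (0.10 * (n : ℝ) ≤ (bisectionWidth G : ℝ)) ∧
  ∀ ℓ : ℕ, ℓ ≤ 20 → (({v : Fin n | OnCycleOfLength G ℓ v}).ncard : ℝ) ≤ Real.log n

/-- The degree of a vertex of the induced subgraph `G[S]`. -/
noncomputable def inducedDegree {V : Type*} (G : SimpleGraph V) (S : Set V) (v : S) : ℕ :=
  ((G.induce S).neighborSet v).ncard

/-- The conclusion for one side `S` of the bisection: there are two distinct vertices of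
degree at most two in `G[S]` at distance at most eight in `G[S]`. -/
def HasClosePairOfSmallDegree {V : Type*} (G : SimpleGraph V) (S : Set V) : Prop :=
  ∃ u w : S, u ≠ w ∧ inducedDegree G S u ≤ 2 ∧ inducedDegree G S w ≤ 2 ∧
    (G.induce S).Reachable u w ∧ (G.induce S).dist u w ≤ 8

/-!
In a minimal bisection every vertex has a neighbour on its own side: otherwise swapping it with a
vertex of the other side that receives a different cut edge lowers the cut. Every cut edge leaves
a vertex of degree at most two in `G[S]`, so there are at least `bw(G) / 3 ≥ n / 30` of them.
If no two were within distance eight, the balls of radius four around them would be disjoint.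
A ball meeting no cycle of length at most eight grows like a tree in which all vertices but the
centre have degree three, so it has at least `1 + 1 + 2 + 4 + 8 = 16` vertices; every other ball
contains one of the `O(log n)` vertices on short cycles. Hence `n / 30 ≤ n / 32 + O(log n)`,
which fails for large `n`.
-/

open Finset

theorem Finset.mul_card_le_card_add_mul_card {ι α : Type*} [Fintype α] [DecidableEq α]
    {W : Finset ι} {B : ι → Finset α} (hB : (W : Set ι).PairwiseDisjoint B) (Y : Finset α)
    {m : ℕ} (h : ∀ i ∈ W, m ≤ #(B i) ∨ (B i ∩ Y).Nonempty) :
    m * #W ≤ Fintype.card α + m * #Y := by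
  have hcover : ∑ i ∈ W, #(B i) ≤ Fintype.card α := by
    rw [← card_biUnion hB]
    exact card_le_univ _
  have hhit : ∑ i ∈ W, #(B i ∩ Y) ≤ #Y := by
    rw [← card_biUnion (hB.mono fun i => inter_subset_left)]
    exact card_le_card (biUnion_subset.2 fun i _ => inter_subset_right)
  have hpoint : ∀ i ∈ W, m ≤ #(B i) + m * #(B i ∩ Y) := by
    intro i hi
    rcases h i hi with hBi | hBi
    · omega
    · exact le_add_left (Nat.le_mul_of_pos_right m hBi.card_pos)
  calc m * #W = ∑ i ∈ W, m := by rw [sum_const, smul_eq_mul, mul_comm]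
    _ ≤ ∑ i ∈ W, (#(B i) + m * #(B i ∩ Y)) := sum_le_sum hpoint
    _ ≤ Fintype.card α + m * #Y := by
      rw [sum_add_distrib, ← mul_sum]
      gcongr

theorem OnCycleOfLength.map {V W : Type*} {G : SimpleGraph V} {G' : SimpleGraph W}
    (f : G ↪g G') {ℓ : ℕ} {v : V} (h : OnCycleOfLength G ℓ v) : OnCycleOfLength G' ℓ (f v) := by
  obtain ⟨u, c, hc, hl, hv⟩ := h
  exact ⟨f u, c.map f.toHom, hc.map f.injective, by simp [hl], by simpa using hv⟩

theorem ncard_setOf_exists_onCycleOfLength_le {V : Type*} [Finite V] (G : SimpleGraph V)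
    (L : ℕ) {c : ℝ} (h : ∀ ℓ ≤ L, ({v | OnCycleOfLength G ℓ v}.ncard : ℝ) ≤ c) :
    ({v | ∃ ℓ ≤ L, OnCycleOfLength G ℓ v}.ncard : ℝ) ≤ (L + 1) * c := by
  have hsub : {v | ∃ ℓ ≤ L, OnCycleOfLength G ℓ v} ⊆
      ⋃ ℓ ∈ range (L + 1), {v | OnCycleOfLength G ℓ v} := fun v ⟨ℓ, hℓ, hv⟩ =>
    Set.mem_biUnion (mem_range.2 (Nat.lt_succ_of_le hℓ)) hv
  calc ({v | ∃ ℓ ≤ L, OnCycleOfLength G ℓ v}.ncard : ℝ)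
      ≤ ∑ ℓ ∈ range (L + 1), ({v | OnCycleOfLength G ℓ v}.ncard : ℝ) := by
        exact_mod_cast (Set.ncard_le_ncard hsub).trans (set_ncard_biUnion_le _ _)
    _ ≤ ∑ ℓ ∈ range (L + 1), c :=
        sum_le_sum fun ℓ hℓ => h ℓ (Nat.le_of_lt_succ (mem_range.1 hℓ))
    _ = (L + 1) * c := by simp

namespace SimpleGraph

variable {V : Type*} {G : SimpleGraph V}

theorem Walk.exists_onCycleOfLength_of_ne {a b : V} {p q : G.Walk a b} (hp : p.IsPath)
    (hq : q.IsPath) (hpq : p ≠ q) :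
    ∃ ℓ ≤ p.length + q.length, ∃ v, (v ∈ p.support ∨ v ∈ q.support) ∧ OnCycleOfLength G ℓ v := by
  let H : SimpleGraph V := fromEdgeSet {e | e ∈ p.edges ∨ e ∈ q.edges}
  have hH : ∀ {e}, e ∈ H.edgeSet ↔ (e ∈ p.edges ∨ e ∈ q.edges) ∧ ¬e.IsDiag := by simp [H]
  have hHG : H ≤ G := fun x y hxy => by
    obtain ⟨he | he, -⟩ := hxy
    · exact p.adj_of_mem_edges he
    · exact q.adj_of_mem_edges he
  have hpH : ∀ e ∈ p.edges, e ∈ H.edgeSet := fun e he =>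
    hH.2 ⟨Or.inl he, G.not_isDiag_of_mem_edgeSet (p.edges_subset_edgeSet he)⟩
  have hqH : ∀ e ∈ q.edges, e ∈ H.edgeSet := fun e he =>
    hH.2 ⟨Or.inr he, G.not_isDiag_of_mem_edgeSet (q.edges_subset_edgeSet he)⟩
  have hcyclic : ¬H.IsAcyclic := by
    rw [isAcyclic_iff_subsingleton_path]
    intro h
    have := congrArg (fun r : H.Path a b => r.1.transfer G fun _ he =>
        edgeSet_mono hHG (r.1.edges_subset_edgeSet he))
      (Subsingleton.elim (h := h a b) ⟨p.transfer H hpH, hp.transfer hpH⟩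
        ⟨q.transfer H hqH, hq.transfer hqH⟩)
    exact hpq (by simpa [Walk.transfer_self] using this)
  simp only [IsAcyclic, not_forall, not_not] at hcyclic
  obtain ⟨c, γ, hγ⟩ := hcyclic
  refine ⟨γ.length, ?_, c, ?_, c, γ.mapLe hHG, hγ.mapLe hHG, by simp, by simp⟩
  · have hsub : γ.edges ⊆ p.edges ++ q.edges := fun e he => by
      simpa using (hH.1 (γ.edges_subset_edgeSet he)).1
    simpa using (hγ.edges_nodup.subperm hsub).length_le
  · cases γ with
    | nil => exact absurd hγ Walk.not_isCycle_nil
    | cons h γ' =>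
      have := (hH.1 ((Walk.cons h γ').edges_subset_edgeSet List.mem_cons_self)).1
      exact this.imp (Walk.fst_mem_support_of_mem_edges _) (Walk.fst_mem_support_of_mem_edges _)

variable {u : V}

theorem eq_of_adj_of_dist_le {x y z : V} {k : ℕ}
    (hcyc : ∀ ℓ ≤ 2 * k + 2, ∀ v, G.Reachable u v → G.dist u v ≤ G.dist u x →
      ¬OnCycleOfLength G ℓ v)
    (hx : G.Reachable u x) (hkx : k ≤ G.dist u x) (hxy : G.Adj x y) (hxz : G.Adj x z)
    (hy : G.dist u y ≤ k) (hz : G.dist u z ≤ k) : y = z := by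
  classical
  by_contra hyz
  obtain ⟨p, hp, hpy⟩ := (hx.trans hxy.reachable).exists_path_of_dist
  obtain ⟨q, hq, hqz⟩ := (hx.trans hxz.reachable).exists_path_of_dist
  have hx_notMem : ∀ {w} (r : G.Walk u w), r.length ≤ k → G.Adj x w → x ∉ r.support :=
    fun r hr hxw hxr => ((dist_le _).trans_lt
      ((r.length_takeUntil_lt_length hxr hxw.ne).trans_le hr)).not_ge hkx
  have hsupp : ∀ {w} (r : G.Walk u w) (hxw : G.Adj x w), r.length ≤ k →
      ∀ v ∈ (Walk.cons hxw r.reverse).support, G.Reachable u v ∧ G.dist u v ≤ G.dist u x := by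
    intro w r hxw hr v hv
    rw [Walk.support_cons, List.mem_cons, Walk.support_reverse, List.mem_reverse] at hv
    rcases hv with rfl | hv
    · exact ⟨hx, le_rfl⟩
    · exact ⟨⟨r.takeUntil v hv⟩,
        (dist_le _).trans ((r.length_takeUntil_le_length hv).trans (hr.trans hkx))⟩
  have hp' : (Walk.cons hxy p.reverse).IsPath := by
    simpa [hp.reverse] using hx_notMem p (by omega) hxy
  have hq' : (Walk.cons hxz q.reverse).IsPath := by
    simpa [hq.reverse] using hx_notMem q (by omega) hxz
  obtain ⟨ℓ, hℓ, v, hv, hcycle⟩ :=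
    Walk.exists_onCycleOfLength_of_ne hp' hq' (fun h => hyz (Walk.cons.inj h).1)
  obtain ⟨hv, hvx⟩ := hv.elim (hsupp p hxy (by omega) v) (hsupp q hxz (by omega) v)
  exact hcyc ℓ (by simp only [Walk.length_cons, Walk.length_reverse] at hℓ; omega) v hv hvx hcycle

theorem two_mul_ncard_sphere_le [Finite V] {d : ℕ}
    (hdeg : ∀ x, G.Reachable u x → G.dist u x = d → 3 ≤ (G.neighborSet x).ncard)
    (hcyc : ∀ ℓ ≤ 2 * d + 2, ∀ v, G.Reachable u v → G.dist u v ≤ d + 1 →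
      ¬OnCycleOfLength G ℓ v) :
    2 * {x | G.Reachable u x ∧ G.dist u x = d}.ncard ≤
      {x | G.Reachable u x ∧ G.dist u x = d + 1}.ncard := by
  classical
  have := Fintype.ofFinite V
  set s := {x | G.Reachable u x ∧ G.dist u x = d}.toFinset
  set t := {x | G.Reachable u x ∧ G.dist u x = d + 1}.toFinset
  have hs : ∀ {x}, x ∈ s ↔ G.Reachable u x ∧ G.dist u x = d := by simp [s]
  have ht : ∀ {x}, x ∈ t ↔ G.Reachable u x ∧ G.dist u x = d + 1 := by simp [t]
  have hchildren : ∀ x ∈ s, 2 ≤ #(t.bipartiteAbove G.Adj x) := by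
    intro x hx
    obtain ⟨hxr, hxd⟩ := hs.1 hx
    have hparent : {y | G.Adj x y ∧ G.dist u y ≤ d}.Subsingleton :=
      fun y hy z hz => eq_of_adj_of_dist_le
        (fun ℓ hℓ v hv hvx => hcyc ℓ hℓ v hv (by omega)) hxr hxd.ge hy.1 hz.1 hy.2 hz.2
    have hsub : G.neighborSet x ⊆
        {y | G.Adj x y ∧ G.dist u y ≤ d} ∪ ↑(t.bipartiteAbove G.Adj x) := by
      intro y hxy
      have := hxy.reachable.dist_triangle_right u
      rw [dist_eq_one_iff_adj.2 hxy] at this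
      by_cases hyd : G.dist u y ≤ d
      · exact Or.inl ⟨hxy, hyd⟩
      · exact Or.inr ((mem_bipartiteAbove _).2 ⟨ht.2 ⟨hxr.trans hxy.reachable, by omega⟩, hxy⟩)
    have := (Set.ncard_le_ncard hsub).trans (Set.ncard_union_le _ _)
    rw [Set.ncard_coe_finset] at this
    have := hdeg x hxr hxd
    have := Set.ncard_le_one_iff_subsingleton.2 hparent
    omega
  have hparents : ∀ z ∈ t, #(s.bipartiteBelow G.Adj z) ≤ 1 := by
    intro z hz
    obtain ⟨hzr, hzd⟩ := ht.1 hz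
    refine card_le_one.2 fun x hx y hy => ?_
    simp only [mem_bipartiteBelow, hs] at hx hy
    exact eq_of_adj_of_dist_le (fun ℓ hℓ v hv hvz => hcyc ℓ hℓ v hv (hvz.trans hzd.le)) hzr
      (by omega) hx.2.symm hy.2.symm hx.1.2.le hy.1.2.le
  have := card_mul_le_card_mul G.Adj hchildren hparents
  have hs' : {x | G.Reachable u x ∧ G.dist u x = d} = (s : Set V) := by ext; simp [hs]
  have ht' : {x | G.Reachable u x ∧ G.dist u x = d + 1} = (t : Set V) := by ext; simp [ht]
  rw [hs', ht', Set.ncard_coe_finset, Set.ncard_coe_finset]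
  omega

theorem ncard_ball_succ [Finite V] (d : ℕ) :
    {x | G.Reachable u x ∧ G.dist u x ≤ d + 1}.ncard =
      {x | G.Reachable u x ∧ G.dist u x ≤ d}.ncard +
        {x | G.Reachable u x ∧ G.dist u x = d + 1}.ncard := by
  rw [← Set.ncard_union_eq (Set.disjoint_left.2 fun x hx hx' => by simp_all)]
  congr 1
  ext x
  simp only [Set.mem_ofPred_eq, Set.mem_union]
  grind

theorem sixteen_le_ncard_ball [Finite V] (hu : (G.neighborSet u).Nonempty)
    (hdeg : ∀ x, G.Reachable u x → 1 ≤ G.dist u x → G.dist u x ≤ 3 →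
      3 ≤ (G.neighborSet x).ncard)
    (hcyc : ∀ ℓ ≤ 8, ∀ v, G.Reachable u v → G.dist u v ≤ 4 → ¬OnCycleOfLength G ℓ v) :
    16 ≤ {x | G.Reachable u x ∧ G.dist u x ≤ 4}.ncard := by
  have hball0 : {x | G.Reachable u x ∧ G.dist u x ≤ 0}.ncard = 1 := by
    rw [Set.ncard_eq_one]
    refine ⟨u, Set.ext fun x => ⟨fun ⟨hx, hx0⟩ => ?_, fun hx => ?_⟩⟩
    · exact (hx.dist_eq_zero_iff.1 (Nat.le_zero.1 hx0)).symm
    · subst hx; simp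
  have hsphere1 : 1 ≤ {x | G.Reachable u x ∧ G.dist u x = 1}.ncard := by
    obtain ⟨y, hy⟩ := hu
    exact (Set.ncard_pos).2 ⟨y, hy.reachable, dist_eq_one_iff_adj.2 hy⟩
  have hgrowth : ∀ d, 1 ≤ d → d ≤ 3 → 2 * {x | G.Reachable u x ∧ G.dist u x = d}.ncard ≤
      {x | G.Reachable u x ∧ G.dist u x = d + 1}.ncard := fun d hd1 hd3 =>
    two_mul_ncard_sphere_le (fun x hx hxd => hdeg x hx (by omega) (by omega))
      (fun ℓ hℓ v hv hvd => hcyc ℓ (by omega) v hv (by omega))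
  have hb1 := ncard_ball_succ (G := G) (u := u) 0
  have hb2 := ncard_ball_succ (G := G) (u := u) 1
  have hb3 := ncard_ball_succ (G := G) (u := u) 2
  have hb4 := ncard_ball_succ (G := G) (u := u) 3
  have hs2 := hgrowth 1 le_rfl (by norm_num)
  have hs3 := hgrowth 2 (by norm_num) (by norm_num)
  have hs4 := hgrowth 3 (by norm_num) le_rfl
  simp only [Nat.reduceAdd] at hb1 hb2 hb3 hb4 hs2 hs3 hs4
  omega

theorem sixteen_mul_ncard_le [Finite V] {W : Set V}
    (hiso : ∀ u ∈ W, (G.neighborSet u).Nonempty) (hdeg : ∀ x ∉ W, 3 ≤ (G.neighborSet x).ncard)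
    (hfar : ∀ u ∈ W, ∀ w ∈ W, u ≠ w → G.Reachable u w → 8 < G.dist u w) :
    16 * W.ncard ≤ Nat.card V + 16 * {x | ∃ ℓ ≤ 8, OnCycleOfLength G ℓ x}.ncard := by
  classical
  have := Fintype.ofFinite V
  let B : V → Finset V := fun u => {x | G.Reachable u x ∧ G.dist u x ≤ 4}
  let Y : Finset V := {x | ∃ ℓ ≤ 8, OnCycleOfLength G ℓ x}
  have hB : ∀ {u x}, x ∈ B u ↔ G.Reachable u x ∧ G.dist u x ≤ 4 := by simp [B]
  have hdisj : (W.toFinset : Set V).PairwiseDisjoint B := by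
    intro u hu w hw huw
    refine Finset.disjoint_left.2 fun x hux hwx => ?_
    obtain ⟨hux, hux4⟩ := hB.1 hux
    obtain ⟨hwx, hwx4⟩ := hB.1 hwx
    have := hux.dist_triangle_left w
    rw [dist_comm (u := x)] at this
    have := hfar u (by simpa using hu) w (by simpa using hw) huw (hux.trans hwx.symm)
    omega
  have hball : ∀ u ∈ W.toFinset, 16 ≤ #(B u) ∨ (B u ∩ Y).Nonempty := by
    intro u hu
    rw [Set.mem_toFinset] at hu
    refine or_iff_not_imp_right.2 fun hY => ?_
    have hclean : ∀ ℓ ≤ 8, ∀ v, G.Reachable u v → G.dist u v ≤ 4 → ¬OnCycleOfLength G ℓ v :=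
      fun ℓ hℓ v hv hv4 hc => hY ⟨v, mem_inter.2 ⟨hB.2 ⟨hv, hv4⟩, by simpa [Y] using ⟨ℓ, hℓ, hc⟩⟩⟩
    have hdeg' : ∀ x, G.Reachable u x → 1 ≤ G.dist u x → G.dist u x ≤ 3 →
        3 ≤ (G.neighborSet x).ncard := fun x hx h1 h3 => hdeg x fun hxW => by
      have := hfar u hu x hxW (by rintro rfl; simp at h1) hx
      omega
    calc 16 ≤ {x | G.Reachable u x ∧ G.dist u x ≤ 4}.ncard :=
          sixteen_le_ncard_ball (hiso u hu) hdeg' hclean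
      _ = #(B u) := by rw [← Set.ncard_coe_finset]; congr 1; ext; simp [hB]
  have := mul_card_le_card_add_mul_card hdisj Y hball
  rwa [← Set.ncard_eq_toFinset_card', ← Nat.card_eq_fintype_card, ← Set.ncard_coe_finset,
    show (Y : Set V) = {x | ∃ ℓ ≤ 8, OnCycleOfLength G ℓ x} by ext; simp [Y]] at this

end SimpleGraph

section Bisection

variable {V : Type*} {G : SimpleGraph V} {S T : Set V}

theorem cutSize_comm (G : SimpleGraph V) (S T : Set V) : cutSize G S T = cutSize G T S := by
  rw [cutSize, cutSize, ← Set.ncard_image_of_injective _ Prod.swap_injective]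
  congr 1
  ext ⟨x, y⟩
  simp [G.adj_comm, and_left_comm]

theorem IsBisection.symm (h : IsBisection S T) : IsBisection T S :=
  ⟨Set.union_comm S T ▸ h.1, h.2.1.symm, h.2.2.symm⟩

theorem IsBisection.eq_compl (h : IsBisection S T) : T = Sᶜ :=
  (IsCompl.compl_eq ⟨h.2.1, codisjoint_iff.2 h.1⟩).symm

theorem IsBisection.insert_sdiff [Finite V] (hS : IsBisection S Sᶜ) {v w : V} (hv : v ∈ S)
    (hw : w ∉ S) : IsBisection (insert w (S \ {v})) (insert w (S \ {v}))ᶜ := by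
  have hcard : (insert w (S \ {v})).ncard = S.ncard := by
    rw [Set.ncard_insert_of_notMem fun h => hw h.1, Set.ncard_sdiff_singleton_add_one hv]
  refine ⟨Set.union_compl_self _, disjoint_compl_right, ?_⟩
  rw [Set.ncard_compl, hcard, ← Set.ncard_compl]
  exact hS.2.2

theorem IsMinimalBisection.compl (h : IsMinimalBisection G S T) : IsMinimalBisection G S Sᶜ :=
  h.1.eq_compl ▸ h

theorem IsMinimalBisection.symm (h : IsMinimalBisection G S T) : IsMinimalBisection G T S :=
  ⟨h.1.symm, cutSize_comm G T S ▸ h.2⟩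

theorem inducedDegree_eq_ncard (G : SimpleGraph V) (S : Set V) (v : S) :
    inducedDegree G S v = (G.neighborSet v ∩ S).ncard := by
  rw [inducedDegree, neighborSet_induce, ← Set.ncard_image_of_injective _ Subtype.val_injective,
    Set.image_preimage_eq_inter_range, Subtype.range_coe]

theorem IsCubic.inducedDegree_add_ncard_sdiff [Finite V] (hG : IsCubic G) {v : V}
    (hv : v ∈ S) : inducedDegree G S ⟨v, hv⟩ + (G.neighborSet v \ S).ncard = 3 := by
  rw [inducedDegree_eq_ncard, Set.ncard_inter_add_ncard_sdiff_eq_ncard, hG]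

theorem IsCubic.cutSize_compl_le [Finite V] (hG : IsCubic G) (S : Set V) :
    cutSize G S Sᶜ ≤ 3 * {u : S | inducedDegree G S u ≤ 2}.ncard := by
  classical
  have := Fintype.ofFinite V
  let C : Finset (V × V) := {p | p.1 ∈ S ∧ p.2 ∈ Sᶜ ∧ G.Adj p.1 p.2}
  let W : Finset S := {u | inducedDegree G S u ≤ 2}
  have hC : cutSize G S Sᶜ = #C := by
    rw [cutSize, ← Set.ncard_coe_finset]; simp [C]
  have hW : {u : S | inducedDegree G S u ≤ 2}.ncard = #W := by
    rw [← Set.ncard_coe_finset]; simp [W]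
  have hsource : ∀ p ∈ C, 1 ≤ #(W.bipartiteBelow (fun u p => u.1 = p.1) p) := by
    rintro ⟨x, y⟩ hp
    obtain ⟨hx, hy, hxy⟩ : x ∈ S ∧ y ∉ S ∧ G.Adj x y := by simpa [C] using hp
    refine one_le_card.2 ⟨⟨x, hx⟩, (mem_bipartiteBelow _).2 ⟨?_, rfl⟩⟩
    have hout : 0 < (G.neighborSet x \ S).ncard := (Set.ncard_pos).2 ⟨y, hxy, hy⟩
    have := hG.inducedDegree_add_ncard_sdiff hx
    simp only [W, mem_filter, mem_univ, true_and]
    omega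
  have htarget : ∀ u ∈ W, #(C.bipartiteAbove (fun u p => u.1 = p.1) u) ≤ 3 := by
    intro u _
    rw [← hG u, ← Set.ncard_coe_finset]
    refine Set.ncard_le_ncard_of_injOn Prod.snd (fun p hp => ?_) (fun p hp q hq h => ?_)
    · obtain ⟨hpC, hup⟩ := (mem_bipartiteAbove _).1 hp
      exact hup ▸ (mem_filter.1 hpC).2.2.2
    · exact Prod.ext (((mem_bipartiteAbove _).1 hp).2.symm.trans
        ((mem_bipartiteAbove _).1 hq).2) h
  have := card_mul_le_card_mul' _ hsource htarget
  omega

/-- Moving `v` across removes the three cut edges at `v` and the cut edge `xw`, and moving `w`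
across creates at most the three edges at `w`. -/
theorem IsCubic.cutSize_insert_sdiff_lt [Finite V] (hG : IsCubic G) {v x w : V} (hv : v ∈ S)
    (hvS : Disjoint (G.neighborSet v) S) (hx : x ∈ S) (hxv : x ≠ v) (hw : w ∉ S)
    (hxw : G.Adj x w) :
    cutSize G (insert w (S \ {v})) (insert w (S \ {v}))ᶜ < cutSize G S Sᶜ := by
  set C := {p : V × V | p.1 ∈ S ∧ p.2 ∈ Sᶜ ∧ G.Adj p.1 p.2}
  set I := insert (x, w) ({v} ×ˢ G.neighborSet v)
  have hstar : ∀ a, ({a} ×ˢ G.neighborSet a).ncard = 3 := by simp [Set.ncard_prod, hG _]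
  have hI : I ⊆ C := by
    rintro ⟨a, b⟩ (h | ⟨ha, hb⟩)
    · obtain ⟨rfl, rfl⟩ := Prod.mk.inj h
      exact ⟨hx, hw, hxw⟩
    · obtain rfl : a = v := ha
      exact ⟨hv, hvS.notMem_of_mem_left hb, hb⟩
  have hIcard : I.ncard = 4 := by
    rw [Set.ncard_insert_of_notMem (by simp [hxv]), hstar]
  have hnew : {p : V × V | p.1 ∈ insert w (S \ {v}) ∧ p.2 ∈ (insert w (S \ {v}))ᶜ ∧
      G.Adj p.1 p.2} ⊆ (C \ I) ∪ {w} ×ˢ G.neighborSet w := by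
    rintro ⟨a, b⟩ ⟨ha, hb, hab⟩
    simp only [Set.mem_compl_iff, Set.mem_insert_iff, Set.mem_sdiff, Set.mem_singleton_iff,
      not_or, not_and, not_not] at ha hb
    by_cases haw : a = w
    · exact Or.inr ⟨haw, haw ▸ hab⟩
    · obtain ⟨haS, hav⟩ := ha.resolve_left haw
      have hbS : b ∉ S := fun hbS => hvS.notMem_of_mem_right haS (hb.2 hbS ▸ hab.symm)
      refine Or.inl ⟨⟨haS, hbS, hab⟩, ?_⟩
      rintro (h | ⟨h, -⟩)
      · exact hb.1 (Prod.mk.inj h).2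
      · exact hav h
  calc cutSize G _ _ ≤ ((C \ I) ∪ {w} ×ˢ G.neighborSet w).ncard := Set.ncard_le_ncard hnew
    _ ≤ (C \ I).ncard + 3 := (Set.ncard_union_le _ _).trans_eq (by rw [hstar])
    _ < C.ncard := by
      have := Set.ncard_le_ncard hI
      rw [Set.ncard_sdiff hI]
      omega

theorem IsMinimalBisection.nonempty_inter_neighborSet [Finite V] (hG : IsCubic G)
    (hS : IsMinimalBisection G S Sᶜ) (hcut : 4 ≤ cutSize G S Sᶜ) {v : V} (hv : v ∈ S) :
    (G.neighborSet v ∩ S).Nonempty := by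
  rw [← Set.not_disjoint_iff_nonempty_inter]
  intro hvS
  obtain ⟨⟨x, w⟩, hxw, hxv⟩ := Set.exists_mem_notMem_of_ncard_lt_ncard
    (s := {v} ×ˢ G.neighborSet v) (t := {p : V × V | p.1 ∈ S ∧ p.2 ∈ Sᶜ ∧ G.Adj p.1 p.2})
    (by rw [Set.ncard_prod, Set.ncard_singleton, hG]; exact hcut)
  obtain ⟨hx, hw, hxw⟩ : x ∈ S ∧ w ∈ Sᶜ ∧ G.Adj x w := hxw
  have hlt := hG.cutSize_insert_sdiff_lt hv hvS hx (fun h => hxv ⟨h, h ▸ hxw⟩) hw hxw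
  have hle : bisectionWidth G ≤ cutSize G (insert w (S \ {v})) (insert w (S \ {v}))ᶜ :=
    Nat.sInf_le ⟨_, _, hS.1.insert_sdiff hv hw, rfl⟩
  exact (hlt.trans_le' hle).ne' hS.2

theorem sixteen_mul_ncard_le_of_not_hasClosePair [Finite V]
    (hiso : ∀ v ∈ S, (G.neighborSet v ∩ S).Nonempty) (hfar : ¬HasClosePairOfSmallDegree G S) :
    16 * {u : S | inducedDegree G S u ≤ 2}.ncard ≤
      S.ncard + 16 * {v ∈ S | ∃ ℓ ≤ 8, OnCycleOfLength G ℓ v}.ncard := by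
  have hcount := (G.induce S).sixteen_mul_ncard_le (W := {u | inducedDegree G S u ≤ 2})
    (fun u _ => (hiso u u.2).elim fun y hy => ⟨⟨y, hy.2⟩, hy.1⟩)
    (fun x hx => Nat.lt_of_not_le hx)
    (fun u hu w hw huw hr => not_le.1 fun h8 => hfar ⟨u, w, huw, hu, hw, hr, h8⟩)
  have hshort : {x : S | ∃ ℓ ≤ 8, OnCycleOfLength (G.induce S) ℓ x}.ncard ≤
      {v ∈ S | ∃ ℓ ≤ 8, OnCycleOfLength G ℓ v}.ncard := by
    rw [← Set.ncard_image_of_injective _ Subtype.val_injective]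
    refine Set.ncard_le_ncard ?_
    rintro _ ⟨x, ⟨ℓ, hℓ, hc⟩, rfl⟩
    exact ⟨x.2, ℓ, hℓ, hc.map (Embedding.induce S)⟩
  rw [Nat.card_coe_set_eq] at hcount
  omega

/-- The constant is `4320 = 480 * 9`: the cut gives `n ≤ 30 |W|` for the set `W` of vertices of
degree at most two in `G[S]`, ball packing gives `16 |W| ≤ n / 2 + 16 |Y|` for the set `Y` of
vertices on cycles of length at most eight, and `|Y| ≤ 9 log n`. -/
theorem IsMinimalBisection.hasClosePairOfSmallDegree [Finite V] (hG : IsCubic G)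
    (hS : IsMinimalBisection G S Sᶜ) (hwidth : (Nat.card V : ℝ) ≤ 10 * bisectionWidth G)
    (hcyc : ∀ ℓ ≤ 8, ({v | OnCycleOfLength G ℓ v}.ncard : ℝ) ≤ Real.log (Nat.card V))
    (hlarge : 40 ≤ Nat.card V) (hlog : 4320 * Real.log (Nat.card V) < Nat.card V) :
    HasClosePairOfSmallDegree G S := by
  by_contra hfar
  have hcut : Nat.card V ≤ 10 * cutSize G S Sᶜ := by rw [hS.2]; exact_mod_cast hwidth
  have hhalf : 2 * S.ncard = Nat.card V := by
    rw [two_mul]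
    nth_rewrite 2 [hS.1.2.2]
    exact Set.ncard_add_ncard_compl S
  have hlow := hG.cutSize_compl_le S
  have hcount := sixteen_mul_ncard_le_of_not_hasClosePair
    (fun v hv => hS.nonempty_inter_neighborSet hG (by omega) hv) hfar
  set Y := {v ∈ S | ∃ ℓ ≤ 8, OnCycleOfLength G ℓ v}
  have hY : (Y.ncard : ℝ) ≤ 9 * Real.log (Nat.card V) :=
    (Nat.cast_le.2 (Set.ncard_le_ncard fun v hv => hv.2)).trans
      ((ncard_setOf_exists_onCycleOfLength_le G 8 hcyc).trans_eq (by norm_num))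
  have hn : Nat.card V ≤ 480 * Y.ncard := by omega
  have : (Nat.card V : ℝ) ≤ 480 * Y.ncard := by exact_mod_cast hn
  linarith

end Bisection

theorem eventually_mul_log_lt (C : ℝ) : ∀ᶠ n : ℕ in Filter.atTop, C * Real.log n < n := by
  have h := (Real.isLittleO_log_id_atTop.const_mul_left C).comp_tendsto
    tendsto_natCast_atTop_atTop
  filter_upwards [h.eventuallyLT_norm_of_eventually_pos
    (tendsto_natCast_atTop_atTop.eventually_gt_atTop 0 |>.mono fun n hn => by simpa using hn)]
    with n hn
  simp only [Function.comp_apply, id, Real.norm_eq_abs, Nat.abs_cast] at hn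
  exact (le_abs_self _).trans_lt hn

/-- For all large enough even `n`: in any typical 3-regular graph on `n` vertices with a
minimal bisection `(V1, V2)`, each side contains two distinct vertices of degree at most
two (in the induced subgraph) at distance at most eight (in the induced subgraph). -/
theorem statement6 :
    ∃ N : ℕ, ∀ n : ℕ, N ≤ n → Even n →
      ∀ G : SimpleGraph (Fin n), IsCubic G → Typical G →
        ∀ V1 V2 : Set (Fin n), IsMinimalBisection G V1 V2 →
          HasClosePairOfSmallDegree G V1 ∧ HasClosePairOfSmallDegree G V2 := by
  obtain ⟨N, hN⟩ := Filter.eventually_atTop.1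
    ((eventually_mul_log_lt 4320).and (Filter.eventually_ge_atTop 40))
  refine ⟨N, fun n hn _ G hG hT V1 V2 hV => ?_⟩
  obtain ⟨hlog, hlarge⟩ := hN n hn
  have hside : ∀ S, IsMinimalBisection G S Sᶜ → HasClosePairOfSmallDegree G S := fun S hS =>
    hS.hasClosePairOfSmallDegree hG (by rw [Nat.card_fin]; linarith [hT.1])
      (fun ℓ hℓ => by simpa using hT.2 ℓ (by omega)) (by simpa) (by simpa)
  exact ⟨hside V1 hV.compl, hside V2 hV.symm.compl⟩
end

section
/- Let H be a finite bipartite simple graph with parts H1 and H2 in which every vertex has degree at most two. Then H contains an independent set I with |I ∩ H1| ≥ ⌈|H1|/2⌉ − 1 and |I ∩ H2| ≥ ⌈|H2|/2⌉ − 1. -/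
/-!
Split the first part `A` into `Y` and `A \ Y`. A vertex of the second part `B` whose
`A`-neighbours do not all lie on one side has neighbours on both sides; call it split. Every other
vertex of `B` has all its `A`-neighbours inside `Y` or inside `A \ Y`, so for the better side `P`
at least `(|B| - #split) / 2` vertices of `B` have no neighbour in `A \ P`, and together with
`A \ P` they form an independent set.

Degrees at most two allow `Y` of every size with at most two split vertices: grow `Y` one vertex
at a time, and while some vertex `b` is split, add its neighbour outside `Y`. This unsplits `b`,
and the new vertex has at most one other neighbour that could become split.
-/

open Finset

namespace SimpleGraph

variable {V : Type*} (G : SimpleGraph V)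

theorem not_adj_of_mem_of_mem {H1 H2 : Set V} (hdisj : Disjoint H1 H2)
    (hbip : ∀ u v : V, G.Adj u v → (u ∈ H1 ∧ v ∈ H2) ∨ (u ∈ H2 ∧ v ∈ H1))
    {u v : V} (hu : u ∈ H1) (hv : v ∈ H1) : ¬ G.Adj u v := fun huv => by
  rcases hbip u v huv with ⟨-, hv'⟩ | ⟨hu', -⟩
  exacts [Set.disjoint_left.mp hdisj hv hv', Set.disjoint_left.mp hdisj hu hu']

variable [Fintype V] [DecidableEq V] [DecidableRel G.Adj]

theorem three_le_degree_of_adj {b u v w : V} (hu : G.Adj b u) (hv : G.Adj b v) (hw : G.Adj b w)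
    (huv : u ≠ v) (huw : u ≠ w) (hvw : v ≠ w) : 3 ≤ G.degree b := by
  rw [← card_neighborFinset_eq_degree]
  calc 3 = #{u, v, w} := (card_eq_three.mpr ⟨u, v, w, huv, huw, hvw, rfl⟩).symm
    _ ≤ _ := card_le_card <| by simp [insert_subset_iff, hu, hv, hw]

variable (A B : Finset V)

def splitSet (Y : Finset V) : Finset V :=
  {b ∈ B | (∃ a ∈ Y, G.Adj b a) ∧ ∃ a ∈ A \ Y, G.Adj b a}

def confinedTo (P : Finset V) : Finset V :=
  {b ∈ B | ∀ a ∈ A, G.Adj b a → a ∈ P}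

variable {G A B}

theorem card_le_card_confinedTo_add_card_confinedTo_sdiff_add_card_splitSet (Y : Finset V) :
    #B ≤ #(G.confinedTo A B Y) + #(G.confinedTo A B (A \ Y)) + #(G.splitSet A B Y) := by
  refine (card_le_card fun b hb => ?_).trans ((card_union_le _ _).trans
    (Nat.add_le_add_right (card_union_le _ _) _))
  by_contra hnot
  simp only [confinedTo, splitSet, mem_union, mem_filter, hb, true_and, not_or, not_forall,
    mem_sdiff] at hnot
  obtain ⟨⟨⟨a, haA, hab, haY⟩, c, hcA, hcb, hcY⟩, hsplit⟩ := hnot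
  exact hsplit ⟨⟨c, not_not.mp (not_and.mp hcY hcA), hcb⟩, a, ⟨haA, haY⟩, hab⟩

theorem splitSet_insert_subset (Y : Finset V) (v : V) :
    G.splitSet A B (insert v Y) ⊆ G.splitSet A B Y ∪ G.neighborFinset v := by
  intro b hb
  simp only [splitSet, mem_filter, mem_insert, mem_sdiff] at hb
  obtain ⟨hbB, ⟨a, ha, hab⟩, ⟨c, ⟨hcA, hcY⟩, hcb⟩⟩ := hb
  by_cases hvb : G.Adj v b
  · exact mem_union_right _ ((G.mem_neighborFinset v b).mpr hvb)
  · have hav : a ≠ v := by rintro rfl; exact hvb hab.symm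
    refine mem_union_left _ (mem_filter.mpr ⟨hbB, ⟨a, ha.resolve_left hav, hab⟩, c, ?_, hcb⟩)
    exact mem_sdiff.mpr ⟨hcA, fun h => hcY (Or.inr h)⟩

theorem notMem_splitSet_insert (hdeg : ∀ v, G.degree v ≤ 2) {Y : Finset V} {b v : V}
    (hb : b ∈ G.splitSet A B Y) (hv : v ∉ Y) (hvb : G.Adj b v) :
    b ∉ G.splitSet A B (insert v Y) := by
  intro hb'
  simp only [splitSet, mem_filter, mem_insert, mem_sdiff, not_or] at hb hb'
  obtain ⟨-, ⟨u, hu, hub⟩, -⟩ := hb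
  obtain ⟨-, -, ⟨w, ⟨-, hwv, hwY⟩, hwb⟩⟩ := hb'
  have := G.three_le_degree_of_adj hub hvb hwb (by rintro rfl; exact hv hu)
    (by rintro rfl; exact hwY hu) (Ne.symm hwv)
  have := hdeg b
  omega

theorem exists_card_splitSet_insert_le_two (hdeg : ∀ v, G.degree v ≤ 2) {Y : Finset V}
    (hYA : Y ⊂ A) (hY : #(G.splitSet A B Y) ≤ 2) :
    ∃ v ∈ A \ Y, #(G.splitSet A B (insert v Y)) ≤ 2 := by
  rcases (G.splitSet A B Y).eq_empty_or_nonempty with hempty | ⟨b, hb⟩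
  · obtain ⟨v, hv⟩ := sdiff_nonempty.mpr (not_subset_of_ssubset hYA)
    refine ⟨v, hv, ?_⟩
    calc #(G.splitSet A B (insert v Y)) ≤ #(G.splitSet A B Y ∪ G.neighborFinset v) :=
          card_le_card (splitSet_insert_subset Y v)
      _ = G.degree v := by rw [hempty, empty_union, card_neighborFinset_eq_degree]
      _ ≤ 2 := hdeg v
  · obtain ⟨v, hv, hvb⟩ := (mem_filter.mp hb).2.2
    refine ⟨v, hv, ?_⟩
    have hsub : G.splitSet A B (insert v Y) ⊆ (G.splitSet A B Y ∪ G.neighborFinset v).erase b :=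
      subset_erase.mpr ⟨splitSet_insert_subset Y v, notMem_splitSet_insert hdeg hb (mem_sdiff.mp hv).2 hvb⟩
    have hinter : 1 ≤ #(G.splitSet A B Y ∩ G.neighborFinset v) :=
      card_pos.mpr ⟨b, mem_inter.mpr ⟨hb, (G.mem_neighborFinset v b).mpr hvb.symm⟩⟩
    have hunion := card_union_add_card_inter (G.splitSet A B Y) (G.neighborFinset v)
    have herase := card_erase_of_mem (mem_union_left (G.neighborFinset v) hb)
    have := card_le_card hsub
    have := hdeg v
    rw [card_neighborFinset_eq_degree] at hunion
    omega

theorem exists_subset_card_eq_card_splitSet_le_two (hdeg : ∀ v, G.degree v ≤ 2) {s : ℕ}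
    (hs : s ≤ #A) : ∃ Y ⊆ A, #Y = s ∧ #(G.splitSet A B Y) ≤ 2 := by
  induction s with
  | zero => exact ⟨∅, empty_subset A, card_empty, by simp [splitSet]⟩
  | succ s ih =>
    obtain ⟨Y, hYA, rfl, hY⟩ := ih (by omega)
    have hYA' : Y ⊂ A := ssubset_of_subset_of_ne hYA (by rintro rfl; omega)
    obtain ⟨v, hv, hvY⟩ := exists_card_splitSet_insert_le_two hdeg hYA' hY
    exact ⟨insert v Y, insert_subset (mem_sdiff.mp hv).1 hYA, card_insert_of_notMem (mem_sdiff.mp hv).2, hvY⟩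

theorem exists_subset_two_mul_card_le_and_card_le_two_mul_card_confinedTo
    (hdeg : ∀ v, G.degree v ≤ 2) :
    ∃ P ⊆ A, 2 * #P ≤ #A + 1 ∧ #B ≤ 2 * #(G.confinedTo A B P) + 2 := by
  obtain ⟨Y, hYA, hYcard, hsplit⟩ :=
    exists_subset_card_eq_card_splitSet_le_two (B := B) hdeg (show (#A + 1) / 2 ≤ #A by omega)
  have hB := card_le_card_confinedTo_add_card_confinedTo_sdiff_add_card_splitSet
    (G := G) (A := A) (B := B) Y
  have hsdiff := card_sdiff_of_subset hYA
  rcases le_total #(G.confinedTo A B (A \ Y)) #(G.confinedTo A B Y) with h | h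
  · exact ⟨Y, hYA, by omega, by omega⟩
  · exact ⟨A \ Y, sdiff_subset, by omega, by omega⟩

theorem sdiff_union_confinedTo_indep (hA : ∀ u ∈ A, ∀ v ∈ A, ¬ G.Adj u v)
    (hB : ∀ u ∈ B, ∀ v ∈ B, ¬ G.Adj u v) (P : Finset V) :
    ∀ u ∈ A \ P ∪ G.confinedTo A B P, ∀ v ∈ A \ P ∪ G.confinedTo A B P, ¬ G.Adj u v := by
  have cross : ∀ u ∈ A \ P, ∀ v ∈ G.confinedTo A B P, ¬ G.Adj v u := fun u hu v hv huv =>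
    (mem_sdiff.mp hu).2 ((mem_filter.mp hv).2 u (mem_sdiff.mp hu).1 huv)
  intro u hu v hv huv
  rcases mem_union.mp hu with hu | hu <;> rcases mem_union.mp hv with hv | hv
  · exact hA u (mem_sdiff.mp hu).1 v (mem_sdiff.mp hv).1 huv
  · exact cross u hu v hv huv.symm
  · exact cross v hv u hu huv
  · exact hB u (mem_filter.mp hu).1 v (mem_filter.mp hv).1 huv

end SimpleGraph

open SimpleGraph

theorem statement13_general {V : Type*} [Fintype V] (H : SimpleGraph V) (H1 H2 : Set V)
    (hdisj : Disjoint H1 H2)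
    (hbip : ∀ u v : V, H.Adj u v → (u ∈ H1 ∧ v ∈ H2) ∨ (u ∈ H2 ∧ v ∈ H1))
    (hdeg : ∀ v : V, (H.neighborSet v).ncard ≤ 2) :
    ∃ I : Set V,
      (∀ u ∈ I, ∀ v ∈ I, ¬ H.Adj u v) ∧
      (H1.ncard + 1) / 2 - 1 ≤ (I ∩ H1).ncard ∧
      (H2.ncard + 1) / 2 - 1 ≤ (I ∩ H2).ncard := by
  classical
  set A := H1.toFinset
  set B := H2.toFinset
  have hdegree : ∀ v, H.degree v ≤ 2 := fun v => by
    rw [← card_neighborSet_eq_degree, ← Nat.card_eq_fintype_card, Nat.card_coe_set_eq]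
    exact hdeg v
  have hA : ∀ u ∈ A, ∀ v ∈ A, ¬ H.Adj u v := fun u hu v hv =>
    H.not_adj_of_mem_of_mem hdisj hbip (Set.mem_toFinset.mp hu) (Set.mem_toFinset.mp hv)
  have hB : ∀ u ∈ B, ∀ v ∈ B, ¬ H.Adj u v := fun u hu v hv =>
    H.not_adj_of_mem_of_mem hdisj.symm (fun u v huv => (hbip u v huv).symm)
      (Set.mem_toFinset.mp hu) (Set.mem_toFinset.mp hv)
  obtain ⟨P, hPA, hPcard, hBcard⟩ :=
    exists_subset_two_mul_card_le_and_card_le_two_mul_card_confinedTo (G := H) (A := A) (B := B)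
      hdegree
  set Q := H.confinedTo A B P
  have hcardA : H1.ncard = #A := by rw [← Set.ncard_coe_finset, Set.coe_toFinset]
  have hcardB : H2.ncard = #B := by rw [← Set.ncard_coe_finset, Set.coe_toFinset]
  refine ⟨↑(A \ P ∪ Q), by exact_mod_cast sdiff_union_confinedTo_indep hA hB P, ?_, ?_⟩
  · calc (H1.ncard + 1) / 2 - 1 ≤ #(A \ P) := by rw [card_sdiff_of_subset hPA, hcardA]; omega
      _ = (↑(A \ P) : Set V).ncard := (Set.ncard_coe_finset _).symm
      _ ≤ _ := Set.ncard_le_ncard <| Set.subset_inter (coe_subset.mpr subset_union_left)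
          fun x hx => Set.mem_toFinset.mp (mem_sdiff.mp hx).1
  · calc (H2.ncard + 1) / 2 - 1 ≤ #Q := by rw [hcardB]; omega
      _ = (↑Q : Set V).ncard := (Set.ncard_coe_finset _).symm
      _ ≤ _ := Set.ncard_le_ncard <| Set.subset_inter (coe_subset.mpr subset_union_right)
          fun x hx => Set.mem_toFinset.mp (mem_filter.mp hx).1

/-- Let `H` be a finite bipartite simple graph with parts `H1` and `H2` in which every
vertex has degree at most two. Then `H` contains an independent set `I` with
`|I ∩ H1| ≥ ⌈|H1|/2⌉ − 1` and `|I ∩ H2| ≥ ⌈|H2|/2⌉ − 1`. -/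
theorem statement13 {V : Type*} [Fintype V] (H : SimpleGraph V) (H1 H2 : Set V)
    (hpart : H1 ∪ H2 = Set.univ) (hdisj : Disjoint H1 H2)
    (hbip : ∀ u v : V, H.Adj u v → (u ∈ H1 ∧ v ∈ H2) ∨ (u ∈ H2 ∧ v ∈ H1))
    (hdeg : ∀ v : V, (H.neighborSet v).ncard ≤ 2) :
    ∃ I : Set V,
      (∀ u ∈ I, ∀ v ∈ I, ¬ H.Adj u v) ∧
      (H1.ncard + 1) / 2 - 1 ≤ (I ∩ H1).ncard ∧
      (H2.ncard + 1) / 2 - 1 ≤ (I ∩ H2).ncard :=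
  statement13_general H H1 H2 hdisj hbip hdeg
end

section
/- Let A, B be natural numbers and suppose that the set S of finitely supported sequences (t_i)_{i≥1} of natural numbers satisfying ∑_{i≥1} t_i = A and ∑_{i≥1} i·t_i = B is nonempty. Then there exists a sequence (t_i) ∈ S minimizing the product ∏_{i≥1} (t_i)! over S such that for all but at most one index i one has t_i ≥ t_{i+1}; moreover, if i is an exceptional index (with t_i < t_{i+1}), then t_i = 0, t_{i+1} = 1 and t_{i+2} = 0. -/
/-!
Choose a feasible `t` minimizing `∏ tᵢ!` and, among the minimizers, maximizing `∑ i² tᵢ`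
(which is at most `B²`). If `tᵢ < tᵢ₊₁` and `tⱼ > tⱼ₊₁` for some `j ≥ i + 2`, moving one unit
from `i + 1` to `i` and one from `j` to `j + 1` keeps `t` feasible, does not increase `∏ tᵢ!` and
increases `∑ i² tᵢ`; so after an ascent at `i` the sequence is nondecreasing, hence zero, from
`i + 2` on. If moreover `tᵢ₊₁ ≥ 2`, moving two units from `i + 1` to `i` and `i + 2` is such a move
as well; hence `tᵢ₊₁ = 1` and `tᵢ = 0`.
-/

open Finsupp Nat

namespace PartitionMultiplicities

def factorialProd (t : ℕ →₀ ℕ) : ℕ := t.prod fun _ n => n !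

lemma factorialProd_add_single (u : ℕ →₀ ℕ) (a : ℕ) :
    factorialProd (u + single a 1) = factorialProd u * (u a + 1) := by
  have hg : ∀ _ : ℕ, (0 : ℕ)! = 1 := fun _ => factorial_zero
  rw [factorialProd, factorialProd, ← mul_prod_erase' (u + single a 1) a _ hg,
    ← mul_prod_erase' u a _ hg, erase_add, erase_single, add_zero]
  simp only [coe_add, Pi.add_apply, single_eq_same, factorial_succ]
  ring

/-- `t` is the multiplicity vector of a partition of `B` into `A` parts. -/
def Feasible (A B : ℕ) (t : ℕ →₀ ℕ) : Prop :=
  t 0 = 0 ∧ degree t = A ∧ weight id t = B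

lemma weight_sq_le_sq_weight_id (t : ℕ →₀ ℕ) : weight (· ^ 2) t ≤ weight id t ^ 2 := by
  simp only [weight_apply, smul_eq_mul, id]
  calc ∑ i ∈ t.support, t i * i ^ 2 ≤ ∑ i ∈ t.support, (t i * i) ^ 2 :=
        Finset.sum_le_sum fun i _ => by
          rw [mul_pow]; exact Nat.mul_le_mul_right _ (Nat.le_self_pow two_ne_zero _)
    _ ≤ (∑ i ∈ t.support, t i * i) ^ 2 :=
        Finset.sum_sq_le_sq_sum_of_nonneg fun _ _ => Nat.zero_le _

def IsOptimal (A B : ℕ) (t : ℕ →₀ ℕ) : Prop :=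
  Feasible A B t ∧ (∀ s, Feasible A B s → factorialProd t ≤ factorialProd s) ∧
    ∀ s, Feasible A B s → factorialProd s ≤ factorialProd t → weight (· ^ 2) s ≤ weight (· ^ 2) t

lemma exists_isOptimal {A B : ℕ} (h : ∃ t, Feasible A B t) : ∃ t, IsOptimal A B t := by
  -- `B ^ 2 - ∑ i² tᵢ` does not truncate on feasible `t`, so a lexicographic minimum works.
  obtain ⟨t, ht, hmin⟩ := exists_minimalFor_of_wellFoundedLT (Feasible A B)
    (fun t => toLex (factorialProd t, B ^ 2 - weight (· ^ 2) t)) h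
  have hnot_lt : ∀ s, Feasible A B s → ¬ (factorialProd s < factorialProd t ∨
      factorialProd s = factorialProd t ∧ B ^ 2 - weight (· ^ 2) s < B ^ 2 - weight (· ^ 2) t) :=
    fun s hs hlt =>
      have hlt := Prod.Lex.toLex_lt_toLex.mpr hlt
      hlt.not_ge (hmin hs hlt.le)
  refine ⟨t, ht, fun s hs => ?_, fun s hs hle => ?_⟩
  · by_contra! hlt
    exact hnot_lt s hs (Or.inl hlt)
  · by_contra! hlt
    have := hs.2.2 ▸ weight_sq_le_sq_weight_id s
    exact hnot_lt s hs (hle.lt_or_eq.imp_right fun h => ⟨h, by omega⟩)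

/-- Moving two units outwards from `b ≤ c` to `a` and `d = b + c - a` preserves `∑ tᵢ` and
`∑ i tᵢ` and increases `∑ i² tᵢ` by `2 (b - a) (c - a)`, so at an optimum it must increase
`∏ tᵢ!`. -/
theorem IsOptimal.factorialProd_lt_of_spread {A B : ℕ} {t u : ℕ →₀ ℕ} (ht : IsOptimal A B t)
    {a b c d : ℕ} (ha : 0 < a) (hab : a < b) (hbc : b ≤ c) (hsum : a + d = b + c)
    (htu : t = u + single b 1 + single c 1) :
    (u b + 1) * ((u + single b 1 : ℕ →₀ ℕ) c + 1) < (u a + 1) * (u d + 1) := by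
  set s := u + single a 1 + single d 1
  have hu0 : u 0 = 0 := by
    have := ht.1.1; rw [htu] at this; simp only [coe_add, Pi.add_apply] at this; omega
  have hs : Feasible A B s := by
    obtain ⟨-, hA, hB⟩ := ht.1
    refine ⟨?_, ?_, ?_⟩
    · simp [s, hu0, ha.ne, show d ≠ 0 by omega]
    · rw [← hA, htu]; simp [s, degree_single]
    · rw [← hB, htu]; simp only [s, map_add, weight_single, id, smul_eq_mul]; omega
  have hW : weight (· ^ 2) t < weight (· ^ 2) s := by
    rw [htu]; simp only [s, map_add, weight_single, smul_eq_mul, one_mul]; nlinarith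
  have hF : factorialProd t < factorialProd s := by
    by_contra! hle
    exact (ht.2.2 s hs hle).not_gt hW
  rw [htu, factorialProd_add_single, factorialProd_add_single] at hF
  simp only [s, factorialProd_add_single, coe_add, Pi.add_apply,
    single_eq_of_ne (show d ≠ a by omega), add_zero] at hF
  rw [mul_assoc, mul_assoc] at hF
  exact Nat.lt_of_mul_lt_mul_left hF

lemma eq_zero_of_forall_le_succ {f : ℕ → ℕ} (hf : (Function.support f).Finite) {n : ℕ}
    (h : ∀ j, n ≤ j → f j ≤ f (j + 1)) {j : ℕ} (hj : n ≤ j) : f j = 0 := by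
  obtain ⟨k, hjk, hk⟩ := ((Set.Ici_infinite j).sdiff hf).nonempty
  have := Nat.rel_of_forall_rel_succ_of_le_of_le (· ≤ ·) h hj hjk
  rw [Function.notMem_support.mp hk] at this
  omega

section

variable {A B : ℕ} {t : ℕ →₀ ℕ} {i : ℕ}

theorem IsOptimal.le_succ_of_lt_succ (ht : IsOptimal A B t) (hi : 0 < i) (hv : t i < t (i + 1))
    {j : ℕ} (hj : i + 2 ≤ j) : t j ≤ t (j + 1) := by
  by_contra! hd
  have hle : single (i + 1) 1 + single j 1 ≤ t := by
    rw [le_def]; intro k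
    simp only [coe_add, Pi.add_apply, single_apply]
    split_ifs <;> subst_vars <;> omega
  obtain ⟨u, rfl⟩ := exists_add_of_le hle
  have hspread := ht.factorialProd_lt_of_spread (u := u) hi (by omega) (by omega)
    (show i + (j + 1) = i + 1 + j by omega) (by abel)
  simp only [coe_add, Pi.add_apply, single_eq_same, single_eq_of_ne (show i ≠ i + 1 by omega),
    single_eq_of_ne (show i ≠ j by omega), single_eq_of_ne (show i + 1 ≠ j by omega),
    single_eq_of_ne (show j ≠ i + 1 by omega), single_eq_of_ne (show j + 1 ≠ i + 1 by omega),
    single_eq_of_ne (show j + 1 ≠ j by omega), add_zero, zero_add] at hv hd hspread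
  nlinarith

theorem IsOptimal.eq_zero_of_lt_succ (ht : IsOptimal A B t) (hi : 0 < i) (hv : t i < t (i + 1))
    {j : ℕ} (hj : i + 2 ≤ j) : t j = 0 :=
  eq_zero_of_forall_le_succ t.hasFiniteSupport (fun _ hk => ht.le_succ_of_lt_succ hi hv hk) hj

theorem IsOptimal.eq_one_of_lt_succ (ht : IsOptimal A B t) (hi : 0 < i) (hv : t i < t (i + 1)) :
    t (i + 1) = 1 := by
  by_contra! hne
  have h0 := ht.eq_zero_of_lt_succ hi hv le_rfl
  have hle : single (i + 1) 1 + single (i + 1) 1 ≤ t := by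
    rw [le_def]; intro k
    simp only [coe_add, Pi.add_apply, single_apply]
    split_ifs <;> subst_vars <;> omega
  obtain ⟨u, rfl⟩ := exists_add_of_le hle
  have hspread := ht.factorialProd_lt_of_spread (u := u) hi (by omega) le_rfl
    (show i + (i + 2) = i + 1 + (i + 1) by omega) (by abel)
  simp only [coe_add, Pi.add_apply, single_eq_same, single_eq_of_ne (show i ≠ i + 1 by omega),
    single_eq_of_ne (show i + 2 ≠ i + 1 by omega)] at hv hne h0 hspread
  nlinarith

end

lemma finsum_eq_degree (t : ℕ →₀ ℕ) : ∑ᶠ i, t i = degree t :=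
  finsum_eq_sum_of_support_subset _ (fun_support_eq t).le

lemma finsum_mul_eq_weight_id (t : ℕ →₀ ℕ) : ∑ᶠ i, i * t i = weight id t := by
  rw [weight_apply, Finsupp.sum,
    finsum_eq_sum_of_support_subset (s := t.support) _ fun i hi => ?_]
  · simp only [smul_eq_mul, id, mul_comm]
  · simpa using right_ne_zero_of_mul hi

lemma finprod_factorial_eq_factorialProd (t : ℕ →₀ ℕ) : ∏ᶠ i, (t i)! = factorialProd t := by
  refine finprod_eq_prod_of_mulSupport_subset _ fun i hi => ?_
  by_contra h
  simp_all

lemma feasible_ofSupportFinite {A B : ℕ} {t : ℕ → ℕ} (hfin : (Function.support t).Finite)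
    (h0 : t 0 = 0) (hA : ∑ᶠ i, t i = A) (hB : ∑ᶠ i, i * t i = B) :
    Feasible A B (ofSupportFinite t hfin) :=
  ⟨h0, (finsum_eq_degree _).symm.trans hA, (finsum_mul_eq_weight_id _).symm.trans hB⟩

end PartitionMultiplicities

open PartitionMultiplicities

/-- Among all finitely supported sequences `(t_i)_{i ≥ 1}` of natural numbers with
`∑ t_i = A` and `∑ i·t_i = B` (a nonempty collection), there is one minimizing
`∏ (t_i)!` such that `t_i ≥ t_{i+1}` for all but at most one index `i ≥ 1`, and at any
exceptional index one has `t_i = 0`, `t_{i+1} = 1` and `t_{i+2} = 0`.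
(Sequences are encoded as functions `ℕ → ℕ` vanishing at `0`.) -/
theorem statement16 (A B : ℕ)
    (hS : ∃ t : ℕ → ℕ, t 0 = 0 ∧ (Function.support t).Finite ∧
      (∑ᶠ i : ℕ, t i) = A ∧ (∑ᶠ i : ℕ, i * t i) = B) :
    ∃ t : ℕ → ℕ, t 0 = 0 ∧ (Function.support t).Finite ∧
      (∑ᶠ i : ℕ, t i) = A ∧ (∑ᶠ i : ℕ, i * t i) = B ∧
      (∀ s : ℕ → ℕ, s 0 = 0 → (Function.support s).Finite →
        (∑ᶠ i : ℕ, s i) = A → (∑ᶠ i : ℕ, i * s i) = B →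
        (∏ᶠ i : ℕ, (t i).factorial) ≤ ∏ᶠ i : ℕ, (s i).factorial) ∧
      (∀ i j : ℕ, 1 ≤ i → 1 ≤ j → t i < t (i + 1) → t j < t (j + 1) → i = j) ∧
      (∀ i : ℕ, 1 ≤ i → t i < t (i + 1) →
        t i = 0 ∧ t (i + 1) = 1 ∧ t (i + 2) = 0) := by
  obtain ⟨t₀, h0, hfin, hA, hB⟩ := hS
  obtain ⟨t, ht⟩ := exists_isOptimal ⟨_, feasible_ofSupportFinite hfin h0 hA hB⟩
  obtain ⟨ht0, htA, htB⟩ := ht.1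
  refine ⟨t, ht0, t.hasFiniteSupport, (finsum_eq_degree t).trans htA,
    (finsum_mul_eq_weight_id t).trans htB, fun s hs0 hsfin hsA hsB => ?_,
    fun i j hi hj hvi hvj => ?_, fun i hi hv => ?_⟩
  · rw [finprod_factorial_eq_factorialProd, ← ofSupportFinite_coe (hf := hsfin),
      finprod_factorial_eq_factorialProd]
    exact ht.2.1 _ (feasible_ofSupportFinite hsfin hs0 hsA hsB)
  · rcases lt_trichotomy i j with hij | rfl | hji
    · have := ht.eq_zero_of_lt_succ hi hvi (show i + 2 ≤ j + 1 by omega); omega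
    · rfl
    · have := ht.eq_zero_of_lt_succ hj hvj (show j + 2 ≤ i + 1 by omega); omega
  · have h1 := ht.eq_one_of_lt_succ hi hv
    exact ⟨by omega, h1, ht.eq_zero_of_lt_succ hi hv le_rfl⟩
end

section
/- Let β′ and T be real numbers with 0 < β′ < T < 2β′, and for i ≥ 1 set t_i = ((T−β′)²/(2β′−T)) · ((2β′−T)/β′)^i. Then ∑_{i≥1} t_i = T − β′ and ∑_{i≥1} i·t_i = β′, and for every sequence (s_i)_{i≥1} of nonnegative real numbers with ∑_{i≥1} s_i = T − β′ and ∑_{i≥1} i·s_i = β′ one has ∑_{i≥1} s_i·ln(s_i) ≥ ∑_{i≥1} t_i·ln(t_i) = (T−β′)·ln((T−β′)²/(2β′−T)) + β′·ln((2β′−T)/β′). In other words, the geometric sequence (t_i) is the global minimizer of the entropy-type functional ∑ s_i ln s_i under the two linear constraints. -/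
/-!
Since `log t_i = log a + i log r` is affine in `i`, the cross entropy `∑ s_i log t_i` only depends
on the two constrained sums, so it equals `∑ t_i log t_i`. Summing the pointwise Gibbs inequality
`s log t + s - t ≤ s log s` then gives the bound, the masses `∑ s_i = ∑ t_i` cancelling.
-/

open Real

lemma mul_log_add_sub_le_mul_log {x y : ℝ} (hx : 0 ≤ x) (hy : 0 < y) :
    x * log y + x - y ≤ x * log x := by
  rcases hx.eq_or_lt with rfl | hx
  · simp [hy.le]
  · have h := mul_le_mul_of_nonneg_left (log_le_sub_one_of_pos (div_pos hy hx)) hx.le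
    rw [log_div hy.ne' hx.ne', mul_sub_one, mul_div_cancel₀ _ hx.ne'] at h
    linarith

lemma mul_log_le_mul_log_of_le {x M : ℝ} (hx : 0 ≤ x) (hxM : x ≤ M) :
    x * log x ≤ x * log M := by
  rcases hx.eq_or_lt with rfl | hx
  · simp
  · exact mul_le_mul_of_nonneg_left (log_le_log hx hxM) hx.le

/-- The right-hand side is not a junk `tsum`: `s ≤ m` makes `s log s` summable. -/
theorem le_tsum_mul_log_of_hasSum {ι : Type*} {s t : ι → ℝ} {m L : ℝ} (hs : ∀ i, 0 ≤ s i)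
    (ht : ∀ i, 0 < t i) (hs_sum : HasSum s m) (ht_sum : HasSum t m)
    (hL : HasSum (fun i => s i * log (t i)) L) :
    L ≤ ∑' i, s i * log (s i) := by
  set g : ι → ℝ := fun i => s i * log (t i) + s i - t i
  have hg : HasSum g L := by simpa using (hL.add hs_sum).sub ht_sum
  have hgap_nonneg : ∀ i, 0 ≤ s i * log (s i) - g i := fun i =>
    sub_nonneg.2 (mul_log_add_sub_le_mul_log (hs i) (ht i))
  have hgap : Summable fun i => s i * log (s i) - g i := by
    refine .of_nonneg_of_le hgap_nonneg (fun i => ?_)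
      ((hs_sum.summable.mul_right (log m)).sub hg.summable)
    have := mul_log_le_mul_log_of_le (hs i) (le_hasSum hs_sum i fun j _ => hs j)
    linarith
  calc L = ∑' i, g i := hg.tsum_eq.symm
    _ ≤ ∑' i, g i + ∑' i, (s i * log (s i) - g i) :=
      le_add_of_nonneg_right (tsum_nonneg hgap_nonneg)
    _ = ∑' i, s i * log (s i) := by rw [← hg.summable.tsum_add hgap]; simp

theorem hasSum_mul_log_of_log_eq {ι : Type*} {s t w : ι → ℝ} {A B c d : ℝ}
    (hlog : ∀ i, log (t i) = c + d * w i) (hA : HasSum s A) (hB : HasSum (fun i => w i * s i) B) :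
    HasSum (fun i => s i * log (t i)) (A * c + B * d) :=
  ((hA.mul_right c).add (hB.mul_right d)).congr_fun fun i => by rw [hlog]; ring

theorem hasSum_mul_geometric_succ {𝕜 : Type*} [NormedField 𝕜] {r : 𝕜} (a : 𝕜) (hr : ‖r‖ < 1) :
    HasSum (fun i : ℕ => a * r ^ (i + 1)) (a * r / (1 - r)) := by
  have h := (hasSum_geometric_of_norm_lt_one hr).mul_left (a * r)
  rw [← div_eq_mul_inv] at h
  exact h.congr_fun fun i => by ring

theorem hasSum_succ_mul_mul_geometric_succ {𝕜 : Type*} [NormedField 𝕜] {r : 𝕜} (a : 𝕜)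
    (hr : ‖r‖ < 1) :
    HasSum (fun i : ℕ => ((i : 𝕜) + 1) * (a * r ^ (i + 1))) (a * r / (1 - r) ^ 2) := by
  have h := ((hasSum_nat_add_iff' (f := fun n : ℕ => (n : 𝕜) * r ^ n) 1).2
    (hasSum_coe_mul_geometric_of_norm_lt_one hr)).mul_left a
  rw [Finset.sum_range_one, pow_zero, Nat.cast_zero, zero_mul, sub_zero, ← mul_div_assoc] at h
  refine h.congr_fun fun i => ?_
  push_cast
  ring

theorem hasSum_mass_moment_geometric {u v : ℝ} (hu : 0 < u) (hv : 0 < v) :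
    HasSum (fun i : ℕ => u ^ 2 / v * (v / (u + v)) ^ (i + 1)) u ∧
    HasSum (fun i : ℕ => ((i : ℝ) + 1) * (u ^ 2 / v * (v / (u + v)) ^ (i + 1))) (u + v) := by
  have hr : ‖v / (u + v)‖ < 1 := by
    rw [norm_of_nonneg (by positivity), div_lt_one (by positivity)]; linarith
  have hsub : 1 - v / (u + v) = u / (u + v) := by
    rw [one_sub_div (by positivity), add_sub_cancel_right]
  constructor
  · have h := hasSum_mul_geometric_succ (u ^ 2 / v) hr
    rwa [hsub, show u ^ 2 / v * (v / (u + v)) / (u / (u + v)) = u by field_simp] at h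
  · have h := hasSum_succ_mul_mul_geometric_succ (u ^ 2 / v) hr
    rwa [hsub, show u ^ 2 / v * (v / (u + v)) / (u / (u + v)) ^ 2 = u + v by field_simp] at h

/-- Let `0 < β′ < T < 2β′` and `t_i = ((T−β′)²/(2β′−T))·((2β′−T)/β′)^i` for `i ≥ 1`. Then
`∑_{i≥1} t_i = T − β′`, `∑_{i≥1} i·t_i = β′`,
`∑_{i≥1} t_i·ln t_i = (T−β′)·ln((T−β′)²/(2β′−T)) + β′·ln((2β′−T)/β′)`, and for every
sequence `(s_i)_{i≥1}` of nonnegative reals with `∑ s_i = T − β′` and `∑ i·s_i = β′` one has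
`∑ s_i·ln s_i ≥ ∑ t_i·ln t_i`; i.e. the geometric sequence is the global minimizer of the
entropy functional under the two linear constraints. (Sums over `i ≥ 1` are written as
`tsum`s over `ℕ` of the shifted sequences; the convention `0·ln 0 = 0` holds since
`Real.log 0 = 0`.) -/
theorem statement17 (β' T : ℝ) (h0 : 0 < β') (h1 : β' < T) (h2 : T < 2 * β')
    (t : ℕ → ℝ)
    (ht : ∀ i : ℕ, t i = ((T - β') ^ 2 / (2 * β' - T)) * ((2 * β' - T) / β') ^ i) :
    (∑' i : ℕ, t (i + 1)) = T - β' ∧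
    (∑' i : ℕ, ((i : ℝ) + 1) * t (i + 1)) = β' ∧
    (∑' i : ℕ, t (i + 1) * Real.log (t (i + 1))) =
      (T - β') * Real.log ((T - β') ^ 2 / (2 * β' - T)) +
        β' * Real.log ((2 * β' - T) / β') ∧
    ∀ s : ℕ → ℝ, (∀ i : ℕ, 1 ≤ i → 0 ≤ s i) →
      Summable (fun i : ℕ => ((i : ℝ) + 1) * s (i + 1)) →
      (∑' i : ℕ, s (i + 1)) = T - β' →
      (∑' i : ℕ, ((i : ℝ) + 1) * s (i + 1)) = β' →
      (∑' i : ℕ, t (i + 1) * Real.log (t (i + 1))) ≤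
        ∑' i : ℕ, s (i + 1) * Real.log (s (i + 1)) := by
  set a := (T - β') ^ 2 / (2 * β' - T)
  set r := (2 * β' - T) / β'
  have ha : 0 < a := div_pos (by nlinarith) (by linarith)
  have hr : 0 < r := div_pos (by linarith) h0
  have ht_pos : ∀ i, 0 < t i := fun i => by rw [ht]; positivity
  obtain ⟨hmass, hmoment⟩ :=
    hasSum_mass_moment_geometric (u := T - β') (v := 2 * β' - T) (by linarith) (by linarith)
  rw [show T - β' + (2 * β' - T) = β' by ring] at hmass hmoment
  replace hmass : HasSum (fun i => t (i + 1)) (T - β') := hmass.congr_fun fun i => ht (i + 1)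
  replace hmoment : HasSum (fun i : ℕ => ((i : ℝ) + 1) * t (i + 1)) β' :=
    hmoment.congr_fun fun i => by rw [ht (i + 1)]
  have hlog : ∀ i : ℕ, log (t (i + 1)) = log a + log r * ((i : ℝ) + 1) := fun i => by
    rw [ht, log_mul ha.ne' (pow_pos hr _).ne', log_pow]; push_cast; ring
  have hentropy := hasSum_mul_log_of_log_eq hlog hmass hmoment
  refine ⟨hmass.tsum_eq, hmoment.tsum_eq, hentropy.tsum_eq,
    fun s hs hs_moment_summable hs_mass hs_moment => ?_⟩
  have hs' : ∀ i : ℕ, 0 ≤ s (i + 1) := fun i => hs (i + 1) (Nat.le_add_left 1 i)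
  have hs_summable : Summable fun i => s (i + 1) :=
    .of_nonneg_of_le hs' (fun i => le_mul_of_one_le_left (hs' i) (by simp)) hs_moment_summable
  rw [hentropy.tsum_eq]
  exact le_tsum_mul_log_of_hasSum hs' (fun i => ht_pos (i + 1))
    (hs_summable.hasSum_iff.2 hs_mass) hmass
    (hasSum_mul_log_of_log_eq hlog (hs_summable.hasSum_iff.2 hs_mass)
      (hs_moment_summable.hasSum_iff.2 hs_moment))
end
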